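/- arXiv:1404.7533 — 5 statements merged into one kernel-verified Lean document; each statement's English description precedes it below -/
import Mathlib

section
/- Let M be an n×n matrix over ℝ (or ℂ). If the trace of M^k equals 0 for all integers k ≥ 2, then the trace of M equals 0. -/
/-!
Write an annihilating polynomial of `M` (its characteristic polynomial) as `X ^ m * q` with `q`
coprime to `X`. A Bézout relation `u * X + v * q = 1` gives `X - X ^ 2 * u = X * v * q`, whose
`(m + 1)`-st power is a multiple of `X ^ m * q`; hence `M - M ^ 2 * u(M)` is nilpotent and has
trace zero, while `M ^ 2 * u(M)` is a combination of powers `M ^ k` with `k ≥ 2`.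
-/

open Polynomial

theorem Polynomial.exists_eq_X_pow_mul_and_isCoprime {K : Type*} [Field K] {p : K[X]}
    (hp : p ≠ 0) : ∃ (m : ℕ) (q : K[X]), p = X ^ m * q ∧ IsCoprime X q := by
  obtain ⟨q, hpq, hXq⟩ := p.exists_eq_pow_rootMultiplicity_mul_and_not_dvd hp 0
  rw [map_zero, sub_zero] at hpq hXq
  exact ⟨_, q, hpq, irreducible_X.coprime_iff_not_dvd.mpr hXq⟩

theorem exists_isNilpotent_sub_sq_mul_aeval {K A : Type*} [Field K] [Ring A] [Algebra K A]
    {a : A} {p : K[X]} (hp : p ≠ 0) (hpa : aeval a p = 0) :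
    ∃ r : K[X], IsNilpotent (a - a ^ 2 * aeval a r) := by
  obtain ⟨m, q, rfl, u, v, huv⟩ := exists_eq_X_pow_mul_and_isCoprime hp
  have hsplit : (X - X ^ 2 * u : K[X]) = X * v * q := by
    linear_combination (-X : K[X]) * huv
  have hpow : (X * v * q : K[X]) ^ (m + 1) = X ^ m * q * (X * v ^ (m + 1) * q ^ m) := by ring
  refine ⟨u, m + 1, ?_⟩
  have hsub : a - a ^ 2 * aeval a u = aeval a (X - X ^ 2 * u) := by simp
  rw [hsub, hsplit, ← map_pow, hpow, map_mul, hpa, zero_mul]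

theorem Matrix.trace_sq_mul_aeval_eq_zero {R n : Type*} [CommRing R] [Fintype n] [DecidableEq n]
    {M : Matrix n n R} (h : ∀ k : ℕ, 2 ≤ k → (M ^ k).trace = 0) (r : R[X]) :
    (M ^ 2 * aeval M r).trace = 0 := by
  rw [aeval_eq_sum_range, Finset.mul_sum, Matrix.trace_sum]
  refine Finset.sum_eq_zero fun i _ => ?_
  rw [Matrix.mul_smul, ← pow_add, Matrix.trace_smul, h _ (Nat.le_add_right 2 i), smul_zero]

/-- If the trace of `M^k` equals 0 for all integers `k ≥ 2`,
then the trace of `M` equals 0. -/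
theorem trace_eq_zero_of_trace_pow_eq_zero (n : ℕ) (M : Matrix (Fin n) (Fin n) ℝ)
    (h : ∀ k : ℕ, 2 ≤ k → (M ^ k).trace = 0) : M.trace = 0 := by
  obtain ⟨r, hr⟩ :=
    exists_isNilpotent_sub_sq_mul_aeval M.charpoly_monic.ne_zero M.aeval_self_charpoly
  calc M.trace = (M - M ^ 2 * aeval M r).trace + (M ^ 2 * aeval M r).trace := by
        rw [Matrix.trace_sub, sub_add_cancel]
    _ = 0 := by
        rw [(Matrix.isNilpotent_trace_of_isNilpotent hr).eq_zero,
          Matrix.trace_sq_mul_aeval_eq_zero h, add_zero]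
end

section
/- Let λ₁,…,λ_p be distinct nonzero complex numbers and n₁,…,n_p positive integers. If ∑_{i=1}^p n_i λ_i^k = 0 for all k with 2 ≤ k ≤ p+1, then p = 0 (i.e., there are no such eigenvalues). -/
/-- If `λ₁, …, λ_p` are distinct nonzero complex numbers, `n₁, …, n_p` are positive
integers and `∑ i, n_i λ_i^k = 0` for all `2 ≤ k ≤ p+1`, then `p = 0`. -/
theorem power_sums_vanish_implies_empty (p : ℕ) (l : Fin p → ℂ) (n : Fin p → ℕ)
    (hne : ∀ i, l i ≠ 0) (hinj : Function.Injective l) (hpos : ∀ i, 0 < n i)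
    (hsum : ∀ k : ℕ, 2 ≤ k → k ≤ p + 1 → ∑ i, (n i : ℂ) * l i ^ k = 0) :
    p = 0 := by
  by_contra h
  have hp : 0 < p := Nat.pos_of_ne_zero h
  set x : Fin p → ℂ := fun i => (n i : ℂ) * l i ^ 2 with hxdef
  have hx : (Matrix.vandermonde l).transpose.mulVec x = 0 := by
    funext k
    have hk := hsum ((k : ℕ) + 2) (by omega) (by omega)
    simp only [Matrix.mulVec, Matrix.transpose_apply, Matrix.vandermonde_apply,
      dotProduct, Pi.zero_apply, hxdef]
    rw [← hk]
    apply Finset.sum_congr rfl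
    intro i _
    ring
  have hdet : ((Matrix.vandermonde l).transpose).det ≠ 0 := by
    rw [Matrix.det_transpose, Matrix.det_vandermonde_ne_zero_iff]
    exact hinj
  have hx0 : x = 0 := Matrix.eq_zero_of_mulVec_eq_zero hdet hx
  have := congrFun hx0 ⟨0, hp⟩
  simp only [hxdef, Pi.zero_apply, mul_eq_zero, pow_eq_zero_iff] at this
  rcases this with h1 | h1
  · exact (hpos ⟨0, hp⟩).ne' (by exact_mod_cast h1)
  · exact hne _ (by simpa using h1)
end

section
/- There is no n×n real matrix M with Tr(M) = 1 and Tr(M^k) = 0 for all k ≥ 2. Consequently, the series on circular strings over a one-letter alphabet defined by r(G_a) = 1 and r(G_{a^k}) = 0 for k > 1 is not computable by assigning a matrix M_a and evaluating r(G_{a^k}) = Tr(M_a^k). -/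
open Polynomial LinearMap Module

/-- Key endomorphism version: no endomorphism of a finite-dimensional real vector space has
trace `1` while all its powers `≥ 2` have trace `0`. -/
lemma no_end_trace_one_powers_zero {V : Type*} [AddCommGroup V] [Module ℝ V]
    [FiniteDimensional ℝ V] (f : Module.End ℝ V)
    (h1 : trace ℝ V f = 1) (h2 : ∀ k : ℕ, 2 ≤ k → trace ℝ V (f ^ k) = 0) : False := by
  classical
  set U : Submodule ℝ V := ⨆ n : ℕ, ker (f ^ n) with hU
  set W : Submodule ℝ V := ⨅ n : ℕ, range (f ^ n) with hW
  have hUW : IsCompl U W := f.isCompl_iSup_ker_pow_iInf_range_pow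
  obtain ⟨N, hN⟩ := Filter.eventually_atTop.mp f.eventually_iSup_ker_pow_eq
  have hUN : U = ker (f ^ N) := hN N le_rfl
  have hfU : ∀ x ∈ U, f x ∈ U := by
    intro x hx
    rw [hUN, mem_ker] at hx ⊢
    have h : (f ^ N) (f x) = f ((f ^ N) x) := by
      rw [← Module.End.mul_apply, ← Module.End.mul_apply, ← pow_succ, ← pow_succ']
    rw [h, hx, map_zero]
  have hfW : ∀ x ∈ W, f x ∈ W := by
    simp only [hW, Submodule.mem_iInf, mem_range]
    intro x H n
    obtain ⟨y, rfl⟩ := H n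
    exact ⟨f y, by rw [← Module.End.mul_apply, ← pow_succ, pow_succ', Module.End.mul_apply]⟩
  set F := f.restrict hfU with hF
  set G := f.restrict hfW with hG
  set e := Submodule.prodEquivOfIsCompl U W hUW with he
  -- `f` is conjugate to `F ⊕ G`
  have hψ : F.prodMap G = e.symm.conj f := by
    set bU := Module.Free.chooseBasis ℝ U
    set bW := Module.Free.chooseBasis ℝ W
    apply (bU.prod bW).ext
    simp only [Basis.prod_apply, coe_inl, coe_inr, prodMap_apply, LinearEquiv.conj_apply,
      LinearEquiv.symm_symm, Submodule.coe_prodEquivOfIsCompl, coe_comp, LinearEquiv.coe_coe,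
      Function.comp_apply, coprod_apply, Submodule.coe_subtype, map_add, Sum.forall, Sum.elim_inl,
      map_zero, ZeroMemClass.coe_zero, add_zero, LinearEquiv.eq_symm_apply, and_self,
      Submodule.coe_prodEquivOfIsCompl', restrict_coe_apply, implies_true, Sum.elim_inr, zero_add,
      e, U, W, F, G]
  -- conjugation respects powers
  have hconj_pow : ∀ k : ℕ, 1 ≤ k → (e.symm.conj f) ^ k = e.symm.conj (f ^ k) := by
    intro k hk
    induction k with
    | zero => omega
    | succ k ih =>
      rcases Nat.eq_or_lt_of_le hk with h | h
      · simp [← h]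
      · have hk1 : 1 ≤ k := by omega
        rw [pow_succ, pow_succ, ih hk1, Module.End.mul_eq_comp, Module.End.mul_eq_comp,
          LinearEquiv.conj_comp]
  -- the trace of `f ^ k` splits
  have key : ∀ k : ℕ, 1 ≤ k →
      trace ℝ V (f ^ k) = trace ℝ U (F ^ k) + trace ℝ W (G ^ k) := by
    intro k hk
    have hprod : (F.prodMap G) ^ k = (F ^ k).prodMap (G ^ k) := by
      clear hk
      induction k with
      | zero => simp [LinearMap.prodMap_one]
      | succ k ih => rw [pow_succ, pow_succ, pow_succ, ih, prodMap_mul]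
    calc trace ℝ V (f ^ k) = trace ℝ (↥U × ↥W) (e.symm.conj (f ^ k)) := by
          rw [LinearMap.trace_conj']
      _ = trace ℝ (↥U × ↥W) ((F.prodMap G) ^ k) := by rw [hψ, hconj_pow k hk]
      _ = trace ℝ (↥U) (F ^ k) + trace ℝ (↥W) (G ^ k) := by rw [hprod, trace_prodMap']
  -- `F` is nilpotent, so all traces of its powers vanish
  have hFnil : IsNilpotent F := by
    rw [LinearMap.isNilpotent_iff_charpoly, LinearMap.charpoly_eq_X_pow_iff]
    have hFpow : ∀ (m : ℕ) (y : U), ((F ^ m) y : V) = (f ^ m) (y : V) := by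
      intro m
      induction m with
      | zero => intro y; simp
      | succ m ih =>
          intro y
          rw [pow_succ', pow_succ', Module.End.mul_apply, Module.End.mul_apply, restrict_coe_apply,
            ih]
    rintro ⟨x, hx⟩
    have hn : (f ^ N) x = 0 := by rw [hUN, mem_ker] at hx; exact hx
    refine ⟨N, Subtype.ext ?_⟩
    rw [ZeroMemClass.coe_zero, hFpow, hn]
  have hFtr : ∀ k : ℕ, 1 ≤ k → trace ℝ U (F ^ k) = 0 := by
    intro k hk
    have : IsNilpotent (F ^ k) := by
      obtain ⟨m, hm⟩ := hFnil
      exact ⟨m, by rw [← pow_mul, mul_comm, pow_mul, hm, zero_pow (by omega : k ≠ 0)]⟩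
    have := LinearMap.isNilpotent_trace_of_isNilpotent this
    exact this.eq_zero
  -- traces of `G`
  have hGtr1 : trace ℝ W G = 1 := by
    have hk := key 1 le_rfl
    have hF1 := hFtr 1 le_rfl
    simp only [pow_one] at hk hF1
    rw [h1, hF1] at hk
    linarith
  have hGtrk : ∀ k : ℕ, 2 ≤ k → trace ℝ W (G ^ k) = 0 := by
    intro k hk
    have := key k (by omega)
    rw [h2 k hk, hFtr k (by omega)] at this
    linarith
  -- `G` is injective, so the constant coefficient of its charpoly is nonzero
  have hGinj : ∀ x : W, G x = 0 → x = 0 := by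
    intro x hx
    have hx1 : (x : V) ∈ U := by
      refine Submodule.mem_iSup_of_mem 1 ?_
      rw [mem_ker, pow_one]
      have : ((G x : W) : V) = f x := rfl
      rw [hx] at this
      exact this.symm
    have hx2 : (x : V) ∈ W := x.2
    have : (x : V) ∈ U ⊓ W := ⟨hx1, hx2⟩
    rw [hUW.inf_eq_bot, Submodule.mem_bot] at this
    exact Subtype.ext this
  have hc0 : constantCoeff (LinearMap.charpoly G) ≠ 0 :=
    ((LinearMap.not_hasEigenvalue_zero_tfae G).out 5 2).mp hGinj
  -- Cayley–Hamilton trace trick: the constant coefficient is zero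
  set p := LinearMap.charpoly G with hp
  have hch : (aeval G) p = 0 := G.aeval_self_charpoly
  have hsum : (0 : ℝ) =
      ∑ i ∈ Finset.range (p.natDegree + 1), p.coeff i * trace ℝ W (G ^ (i + 1)) := by
    have h0 : G * (aeval G) p = 0 := by rw [hch, mul_zero]
    have hexp : G * (aeval G) p =
        ∑ i ∈ Finset.range (p.natDegree + 1), p.coeff i • (G ^ (i + 1)) := by
      rw [aeval_eq_sum_range, Finset.mul_sum]
      refine Finset.sum_congr rfl fun i _ => ?_
      rw [mul_smul_comm, pow_succ']
    calc (0 : ℝ) = trace ℝ W (G * (aeval G) p) := by rw [h0, map_zero]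
      _ = _ := by
          rw [hexp, map_sum]
          refine Finset.sum_congr rfl fun i _ => ?_
          rw [map_smul, smul_eq_mul]
  have : (0 : ℝ) = p.coeff 0 := by
    rw [hsum, Finset.sum_eq_single 0]
    · rw [zero_add, pow_one, hGtr1, mul_one]
    · intro i _ hi
      rw [hGtrk (i + 1) (by omega), mul_zero]
    · intro h
      exact absurd (Finset.mem_range.mpr (by omega)) h
  exact hc0 (by rw [constantCoeff_apply, ← this])

/-- There is no square real matrix `M` with `Tr(M) = 1` and `Tr(M^k) = 0` for all `k ≥ 2`.
Hence the series on circular strings over a one-letter alphabet with `r(G_a) = 1` and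
`r(G_{a^k}) = 0` for `k > 1` cannot be computed as `r(G_{a^k}) = Tr(M_a^k)`. -/
theorem no_matrix_trace_one_powers_zero :
    ¬ ∃ (n : ℕ) (M : Matrix (Fin n) (Fin n) ℝ),
      M.trace = 1 ∧ ∀ k : ℕ, 2 ≤ k → (M ^ k).trace = 0 := by
  rintro ⟨n, M, h1, h2⟩
  set f : Module.End ℝ (Fin n → ℝ) := Matrix.toLinAlgEquiv' M with hf
  have htr : ∀ A : Matrix (Fin n) (Fin n) ℝ,
      trace ℝ (Fin n → ℝ) (Matrix.toLinAlgEquiv' A) = A.trace := by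
    intro A
    rw [trace_eq_matrix_trace ℝ (Pi.basisFun ℝ (Fin n)), LinearMap.toMatrix_eq_toMatrix']
    congr 1
    exact LinearMap.toMatrix'_toLin' A
  refine no_end_trace_one_powers_zero f ?_ ?_
  · rw [hf, htr, h1]
  · intro k hk
    rw [hf, ← map_pow, htr, h2 k hk]
end

section
/- Let r be a recognizable string series over Σ given by a d-dimensional linear representation ⟨ι, (M_σ)_{σ∈Σ}, τ⟩ over ℝ with all coordinates of ι and τ nonzero. Then there exists a d-dimensional linear representation ⟨α, (N_σ)_{σ∈Σ}, α⟩ over ℂ with equal initial and final vectors such that αᵀ N_{w₁}⋯N_{w_n} α = ιᵀ M_{w₁}⋯M_{w_n} τ for every word w = w₁⋯w_n ∈ Σ*. -/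
open Matrix

/-!
Rescaling the coordinates by a diagonal matrix `D = diagonal c` turns the representation
`⟨ι, M, τ⟩` into `⟨c * ι, D⁻¹ M D, τ / c⟩` without changing the series, since the inner factors
`D D⁻¹` cancel in every product. Over an algebraically closed field one can pick
`c i ^ 2 = τ i / ι i`, which makes the two end vectors equal.
-/

theorem List.prod_map_units_conj {M S : Type*} [Monoid M] (u : Mˣ) (f : S → M) (w : List S) :
    (w.map fun σ => ↑u⁻¹ * f σ * ↑u).prod = ↑u⁻¹ * (w.map f).prod * ↑u := by
  induction w with
  | nil => simp
  | cons σ w ih =>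
    simp only [List.map_cons, List.prod_cons]
    rw [ih]
    simp only [mul_assoc, Units.mul_inv_cancel_left]

section DiagonalRescaling

variable {n : Type*} [Fintype n] [DecidableEq n]

theorem dotProduct_diagonal_mul_mul_diagonal_mulVec {R : Type*} [CommSemiring R]
    (a b x y : n → R) (P : Matrix n n R) :
    x ⬝ᵥ (diagonal a * P * diagonal b) *ᵥ y = (a * x) ⬝ᵥ P *ᵥ (b * y) := by
  rw [mul_assoc, ← mulVec_mulVec, ← mulVec_mulVec, dotProduct_mulVec]
  congr 2 <;> ext i
  · exact (vecMul_diagonal x a i).trans (mul_comm _ _)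
  · exact mulVec_diagonal b y i

variable {K S : Type*} [Field K]

theorem series_diagonal_rescaling (ι τ c : n → K) (hc : ∀ i, c i ≠ 0)
    (hτ : ∀ i, c i ^ 2 * ι i = τ i) (M : S → Matrix n n K) (w : List S) :
    (c * ι) ⬝ᵥ (w.map fun σ => diagonal c⁻¹ * M σ * diagonal c).prod *ᵥ (c * ι)
      = ι ⬝ᵥ (w.map M).prod *ᵥ τ := by
  have hcc : ∀ i, c i * c⁻¹ i = 1 := fun i => mul_inv_cancel₀ (hc i)
  let D : (Matrix n n K)ˣ :=
    { val := diagonal c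
      inv := diagonal c⁻¹
      val_inv := by simp only [diagonal_mul_diagonal, hcc, diagonal_one]
      inv_val := by simp only [diagonal_mul_diagonal, mul_comm _ (c _), hcc, diagonal_one] }
  have hprod : (w.map fun σ => diagonal c⁻¹ * M σ * diagonal c).prod
      = diagonal c⁻¹ * (w.map M).prod * diagonal c :=
    List.prod_map_units_conj D M w
  have hinit : c⁻¹ * (c * ι) = ι := funext fun i => inv_mul_cancel_left₀ (hc i) (ι i)
  have hfinal : c * (c * ι) = τ := funext fun i => by rw [← hτ i, sq, mul_assoc]; rfl
  rw [hprod, dotProduct_diagonal_mul_mul_diagonal_mulVec, hinit, hfinal]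

theorem exists_representation_equal_endpoints_of_isAlgClosed [IsAlgClosed K] (ι τ : n → K)
    (hι : ∀ i, ι i ≠ 0) (hτ : ∀ i, τ i ≠ 0) (M : S → Matrix n n K) :
    ∃ (α : n → K) (N : S → Matrix n n K),
      ∀ w : List S, α ⬝ᵥ (w.map N).prod *ᵥ α = ι ⬝ᵥ (w.map M).prod *ᵥ τ := by
  choose c hc using fun i => IsAlgClosed.exists_pow_nat_eq (τ i / ι i) two_pos
  have hc0 : ∀ i, c i ≠ 0 := fun i h0 =>
    div_ne_zero (hτ i) (hι i) (by rw [← hc i, h0, zero_pow two_ne_zero])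
  have hcι : ∀ i, c i ^ 2 * ι i = τ i := fun i => by rw [hc i, div_mul_cancel₀ _ (hι i)]
  exact ⟨c * ι, fun σ => diagonal c⁻¹ * M σ * diagonal c,
    series_diagonal_rescaling ι τ c hc0 hcι M⟩

end DiagonalRescaling

/-- Given a real linear representation `⟨ι, (M_σ), τ⟩` with all coordinates of `ι` and `τ`
nonzero, there is a complex linear representation with equal initial and final vector `α`
computing the same string series. -/
theorem exists_representation_equal_endpoints (d : ℕ) (S : Type)
    (ι τ : Fin d → ℝ) (M : S → Matrix (Fin d) (Fin d) ℝ)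
    (hι : ∀ i, ι i ≠ 0) (hτ : ∀ i, τ i ≠ 0) :
    ∃ (α : Fin d → ℂ) (N : S → Matrix (Fin d) (Fin d) ℂ),
      ∀ w : List S,
        α ⬝ᵥ ((w.map N).prod).mulVec α
          = (fun i => (ι i : ℂ)) ⬝ᵥ
              ((w.map fun σ => (M σ).map (fun x => (x : ℂ))).prod).mulVec
                (fun i => (τ i : ℂ)) :=
  exists_representation_equal_endpoints_of_isAlgClosed _ _
    (fun i => Complex.ofReal_ne_zero.mpr (hι i)) (fun i => Complex.ofReal_ne_zero.mpr (hτ i)) _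
end

section
/- Let Ĝ be a connected hypergraph and G a tiling of Ĝ via the vertex map f : V → V̂. Then f is surjective, and moreover all fibers f⁻¹({v̂}) for v̂ ∈ V̂ have the same cardinality. -/
/-- A hypergraph over a ranked alphabet `(Sym, ar)`: a finite nonempty vertex set `V`
with labels `l : V → Sym`, whose set of hyperedges `E` is a partition of the port set
`P_G = {(v, j) : v ∈ V, j < ar (l v)}`. -/
structure RankedHypergraph (Sym : Type) (ar : Sym → ℕ) where
  V : Type
  fin : Fintype V
  nonempty : Nonempty V
  l : V → Sym
  E : Set (Set ((v : V) × Fin (ar (l v))))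
  cover : ∀ p : (v : V) × Fin (ar (l v)), ∃! h, h ∈ E ∧ p ∈ h
  edges_nonempty : ∀ h ∈ E, h.Nonempty

namespace RankedHypergraph

variable {Sym : Type} {ar : Sym → ℕ}

/-- The ports of a hypergraph. -/
abbrev Port (G : RankedHypergraph Sym ar) := (v : G.V) × Fin (ar (G.l v))

/-- A hypergraph is connected if for every partition of the vertices into two nonempty
parts, some hyperedge contains ports of vertices from both parts. -/
def Connected (G : RankedHypergraph Sym ar) : Prop :=
  ∀ V1 V2 : Set G.V, V1 ∪ V2 = Set.univ → Disjoint V1 V2 →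
    V1.Nonempty → V2.Nonempty →
    ∃ h ∈ G.E, ∃ p q : G.Port, p ∈ h ∧ q ∈ h ∧ p.1 ∈ V1 ∧ q.1 ∈ V2

/-- The map induced on ports by a label-preserving vertex map, `g(v, i) = (f v, i)`. -/
def portMap (G H : RankedHypergraph Sym ar) (f : G.V → H.V)
    (hl : ∀ v, H.l (f v) = G.l v) : G.Port → H.Port :=
  fun p => ⟨f p.1, Fin.cast (congrArg ar (hl p.1)).symm p.2⟩

/-- `G` is a tiling of `H` via the label-preserving vertex map `f` if the induced port
map sends every hyperedge of `G` bijectively onto a hyperedge of `H`. -/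
def IsTiling (G H : RankedHypergraph Sym ar) (f : G.V → H.V)
    (hl : ∀ v, H.l (f v) = G.l v) : Prop :=
  ∀ h ∈ G.E, portMap G H f hl '' h ∈ H.E ∧ Set.InjOn (portMap G H f hl) h

end RankedHypergraph

/-!
The number of `G`-hyperedges lying over a hyperedge `ê` of `Ĝ` equals the size of the fiber of
`f` over any vertex having a port `q` in `ê`: each vertex of the fiber carries exactly one port
over `q`, the `G`-hyperedges through these ports are exactly those over `ê`, and they are pairwise
distinct because the tiling is injective on hyperedges. Hence the fiber size is constant along every
hyperedge of `Ĝ`, so constant by connectedness; and as `G` has a vertex, every fiber is nonempty.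
-/

namespace RankedHypergraph

variable {Sym : Type} {ar : Sym → ℕ}

section edgeOf

variable (G : RankedHypergraph Sym ar)

noncomputable def edgeOf (p : G.Port) : Set G.Port :=
  (G.cover p).exists.choose

theorem edgeOf_mem (p : G.Port) : G.edgeOf p ∈ G.E :=
  (G.cover p).exists.choose_spec.1

theorem mem_edgeOf (p : G.Port) : p ∈ G.edgeOf p :=
  (G.cover p).exists.choose_spec.2

variable {G}

theorem eq_edgeOf {h : Set G.Port} {p : G.Port} (hh : h ∈ G.E) (hp : p ∈ h) :
    h = G.edgeOf p :=
  (G.cover p).unique ⟨hh, hp⟩ ⟨G.edgeOf_mem p, G.mem_edgeOf p⟩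

end edgeOf

section portMap

variable {G H : RankedHypergraph Sym ar} {f : G.V → H.V} {hl : ∀ v, H.l (f v) = G.l v}

theorem portMap_eq_mk_iff {p : G.Port} {w : H.V} {i : Fin (ar (H.l w))} :
    portMap G H f hl p = ⟨w, i⟩ ↔ f p.1 = w ∧ (p.2 : ℕ) = i := by
  obtain ⟨v, j⟩ := p
  constructor
  · intro h
    cases h
    simp
  · rintro ⟨rfl, hj⟩
    exact Sigma.ext rfl (heq_of_eq (Fin.ext hj))

noncomputable def fiberEquivPortFiber (q : H.Port) :
    {v : G.V // f v = q.1} ≃ {p : G.Port // portMap G H f hl p = q} :=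
  Equiv.ofBijective
    (fun v => ⟨⟨v.1, q.2, by rw [← hl, v.2]; exact q.2.isLt⟩,
      portMap_eq_mk_iff.2 ⟨v.2, rfl⟩⟩)
    ⟨fun v₁ v₂ h => Subtype.ext (congrArg (fun p : {p : G.Port // _} => p.1.1) h),
      fun ⟨p, hp⟩ => ⟨⟨p.1, (portMap_eq_mk_iff.1 hp).1⟩, by
        obtain ⟨-, hi⟩ := portMap_eq_mk_iff.1 hp
        exact Subtype.ext (Sigma.ext rfl (heq_of_eq (Fin.ext hi.symm)))⟩⟩

theorem IsTiling.image_edgeOf (ht : IsTiling G H f hl) (p : G.Port) :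
    portMap G H f hl '' G.edgeOf p = H.edgeOf (portMap G H f hl p) :=
  eq_edgeOf (ht _ (G.edgeOf_mem p)).1 (Set.mem_image_of_mem _ (G.mem_edgeOf p))

noncomputable def IsTiling.portFiberEquivEdges (ht : IsTiling G H f hl) (q : H.Port) :
    {p : G.Port // portMap G H f hl p = q} ≃
      {h : Set G.Port // h ∈ G.E ∧ portMap G H f hl '' h = H.edgeOf q} :=
  Equiv.ofBijective
    (fun p => ⟨G.edgeOf p.1, G.edgeOf_mem p.1,
      (ht.image_edgeOf p.1).trans (congrArg H.edgeOf p.2)⟩)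
    ⟨fun p₁ p₂ h => by
      have hedge : G.edgeOf p₁.1 = G.edgeOf p₂.1 := congrArg Subtype.val h
      have hp₂ : p₂.1 ∈ G.edgeOf p₁.1 := hedge ▸ G.mem_edgeOf p₂.1
      exact Subtype.ext <| (ht _ (G.edgeOf_mem p₁.1)).2 (G.mem_edgeOf p₁.1) hp₂
        (p₁.2.trans p₂.2.symm),
    fun ⟨h, hh, himg⟩ => by
      obtain ⟨p, hp, hpq⟩ : q ∈ portMap G H f hl '' h := himg ▸ H.mem_edgeOf q
      exact ⟨⟨p, hpq⟩, Subtype.ext (eq_edgeOf hh hp).symm⟩⟩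

theorem IsTiling.card_fiber_eq (ht : IsTiling G H f hl) (q : H.Port) :
    Nat.card {v : G.V // f v = q.1} =
      Nat.card {h : Set G.Port // h ∈ G.E ∧ portMap G H f hl '' h = H.edgeOf q} :=
  Nat.card_congr ((fiberEquivPortFiber q).trans (ht.portFiberEquivEdges q))

end portMap

theorem Connected.eq_of_forall_edge {α : Type*} {H : RankedHypergraph Sym ar}
    (hc : H.Connected) (φ : H.V → α)
    (hφ : ∀ h ∈ H.E, ∀ p ∈ h, ∀ q ∈ h, φ p.1 = φ q.1)
    (v w : H.V) : φ v = φ w := by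
  by_contra hne
  obtain ⟨h, hh, p, q, hp, hq, hpv, hqv⟩ :=
    hc {u | φ u = φ v} {u | φ u = φ v}ᶜ (Set.union_compl_self _) disjoint_compl_right
      ⟨v, rfl⟩ ⟨w, Ne.symm hne⟩
  exact hqv ((hφ h hh q hq p hp).trans hpv)

end RankedHypergraph

open RankedHypergraph in
/-- If `G` is a tiling of a connected hypergraph `Ĝ` via `f`, then `f` is surjective
and all its fibers have the same cardinality. -/
theorem tiling_surjective_and_constant_fibers {Sym : Type} {ar : Sym → ℕ}
    (G H : RankedHypergraph Sym ar) (f : G.V → H.V) (hl : ∀ v, H.l (f v) = G.l v)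
    (ht : IsTiling G H f hl) (hc : H.Connected) :
    Function.Surjective f ∧
      ∀ w₁ w₂ : H.V, Nat.card {v : G.V // f v = w₁} = Nat.card {v : G.V // f v = w₂} := by
  have hconst : ∀ w₁ w₂ : H.V,
      Nat.card {v : G.V // f v = w₁} = Nat.card {v : G.V // f v = w₂} :=
    hc.eq_of_forall_edge (fun w => Nat.card {v : G.V // f v = w}) fun h hh p hp q hq => by
      simp only [ht.card_fiber_eq p, ht.card_fiber_eq q, ← eq_edgeOf hh hp, ← eq_edgeOf hh hq]
  refine ⟨fun w => ?_, hconst⟩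
  have := G.fin
  obtain ⟨v₀⟩ := G.nonempty
  have hpos : 0 < Nat.card {v : G.V // f v = w} :=
    hconst (f v₀) w ▸ Nat.card_pos_iff.2 ⟨⟨⟨v₀, rfl⟩⟩, inferInstance⟩
  obtain ⟨⟨v, hv⟩⟩ := (Nat.card_pos_iff.1 hpos).1
  exact ⟨v, hv⟩
end
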